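/- Let 2 ≤ q ≤ 3 and let x > 0 be a real number. Then the function ε ↦ ε + (1-ε)·exp_q((1-ε)^{-1} x) is decreasing on the interval (0, 1). -/

import Mathlib

/-! With `t = 1 - ε`, `c = (q - 1) x` and `α = 1 / (q - 1) ∈ (0, 1]` the function is
`1 - t + t ^ (1 - α) * (c + t) ^ α`, so it suffices that `t ↦ t ^ (1 - α) * (c + t) ^ α - t`
increases. The weighted geometric mean `(a, b) ↦ a ^ (1 - α) * b ^ α` is superadditive (weighted
AM–GM applied to `a / (a + a'), b / (b + b')` and to `a' / (a + a'), b' / (b + b')`), and splitting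
`(s, c + s) = (t, c + t) + (s - t, s - t)` gives exactly that increase. -/

open Real Set

theorem Real.rpow_mul_rpow_add_rpow_mul_rpow_le {α a b a' b' : ℝ} (hα₀ : 0 ≤ α) (hα₁ : α ≤ 1)
    (ha : 0 < a) (hb : 0 < b) (ha' : 0 ≤ a') (hb' : 0 ≤ b') :
    a ^ (1 - α) * b ^ α + a' ^ (1 - α) * b' ^ α ≤ (a + a') ^ (1 - α) * (b + b') ^ α := by
  have hA : 0 < a + a' := by positivity
  have hB : 0 < b + b' := by positivity
  have hAB : 0 < (a + a') ^ (1 - α) * (b + b') ^ α := by positivity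
  have amgm {u v : ℝ} (hu : 0 ≤ u) (hv : 0 ≤ v) :
      u ^ (1 - α) * v ^ α / ((a + a') ^ (1 - α) * (b + b') ^ α)
        ≤ (1 - α) * (u / (a + a')) + α * (v / (b + b')) := by
    rw [mul_div_mul_comm, ← div_rpow hu hA.le, ← div_rpow hv hB.le]
    exact geom_mean_le_arith_mean2_weighted (by linarith) hα₀ (by positivity) (by positivity)
      (by ring)
  rw [← div_le_one hAB, add_div]
  calc _ ≤ (1 - α) * (a / (a + a')) + α * (b / (b + b'))
        + ((1 - α) * (a' / (a + a')) + α * (b' / (b + b'))) :=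
        add_le_add (amgm ha.le hb.le) (amgm ha' hb')
    _ = 1 := by field_simp; ring

theorem Real.monotoneOn_rpow_mul_add_rpow_sub {α c : ℝ} (hα₀ : 0 ≤ α) (hα₁ : α ≤ 1) (hc : 0 ≤ c) :
    MonotoneOn (fun t : ℝ => t ^ (1 - α) * (c + t) ^ α - t) (Ioi 0) := by
  intro t ht s _ hts
  have hst : 0 ≤ s - t := sub_nonneg.2 hts
  have h_superadd :=
    rpow_mul_rpow_add_rpow_mul_rpow_le hα₀ hα₁ ht (add_pos_of_nonneg_of_pos hc ht) hst hst
  rw [← rpow_add' hst (by norm_num), sub_add_cancel, rpow_one, add_sub_cancel,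
    show c + t + (s - t) = c + s by ring] at h_superadd
  dsimp only
  linarith

theorem Real.mul_div_add_one_rpow {t : ℝ} (ht : 0 < t) {c : ℝ} (hc : 0 ≤ c) (α : ℝ) :
    t * (c / t + 1) ^ α = t ^ (1 - α) * (c + t) ^ α := by
  rw [div_add_one ht.ne', div_rpow (by positivity) ht.le, rpow_sub ht, rpow_one]
  field_simp

theorem antitoneOn_add_smul_qExp_general (q : ℝ) (hq1 : 2 ≤ q)
    (x : ℝ) (hx : 0 < x) :
    AntitoneOn
      (fun ε : ℝ => ε + (1 - ε) * ((q - 1) * ((1 - ε)⁻¹ * x) + 1) ^ (1 / (q - 1)))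
      (Set.Ioo 0 1) := by
  have hq : 0 < q - 1 := by linarith
  set α := 1 / (q - 1)
  have hα₀ : 0 ≤ α := by positivity
  have hα₁ : α ≤ 1 := by rw [div_le_one hq]; linarith
  have hc : 0 ≤ (q - 1) * x := by positivity
  have h_eq : ∀ ε ∈ Ioo (0 : ℝ) 1, ε + (1 - ε) * ((q - 1) * ((1 - ε)⁻¹ * x) + 1) ^ α
      = 1 + ((1 - ε) ^ (1 - α) * ((q - 1) * x + (1 - ε)) ^ α - (1 - ε)) := by
    intro ε hε
    rw [← mul_div_add_one_rpow (sub_pos.2 hε.2) hc, div_eq_inv_mul, mul_left_comm]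
    ring
  intro ε hε δ hδ hεδ
  simp only [h_eq ε hε, h_eq δ hδ, add_le_add_iff_left]
  exact monotoneOn_rpow_mul_add_rpow_sub hα₀ hα₁ hc (sub_pos.2 hδ.2) (sub_pos.2 hε.2)
    (by linarith)

/-- For `2 ≤ q ≤ 3` and `x > 0`, the function
`ε ↦ ε + (1-ε)·exp_q((1-ε)⁻¹ x)` is decreasing on `(0, 1)`, where
`exp_q(y) = ((q-1)y + 1)^{1/(q-1)}`. -/
theorem antitoneOn_add_smul_qExp (q : ℝ) (hq1 : 2 ≤ q) (hq2 : q ≤ 3)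
    (x : ℝ) (hx : 0 < x) :
    AntitoneOn
      (fun ε : ℝ => ε + (1 - ε) * ((q - 1) * ((1 - ε)⁻¹ * x) + 1) ^ (1 / (q - 1)))
      (Set.Ioo 0 1) :=
  antitoneOn_add_smul_qExp_general q hq1 x hx
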